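/- Let G be a finite graph with n vertices and m edges, and let L(G) be its line graph. Then the characteristic polynomial of the adjacency matrix of L(G) satisfies P_{A(L(G))}(x) = (x+2)^{m−n} · P_{Q(G)}(x+2), where Q(G) = D(G) + A(G) is the signless Laplacian of G. -/

import Mathlib

open Polynomial

variable {V : Type*}

/-- The signless Laplacian `Q(G) = D(G) + A(G)` of a graph. -/
def signlessLaplacian (G : SimpleGraph V) [Fintype V] [DecidableEq V] [DecidableRel G.Adj] :
    Matrix V V ℝ :=
  Matrix.diagonal (fun v => (G.degree v : ℝ)) + G.adjMatrix ℝ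

instance lineGraphAdjDecidable (G : SimpleGraph V) [Fintype V] [DecidableEq V]
    [DecidableRel G.Adj] : DecidableRel G.lineGraph.Adj :=
  fun _ _ => decidable_of_iff _ SimpleGraph.lineGraph_adj_iff_exists.symm

/-! With `N` the vertex–edge incidence matrix of `G`, `N Nᵀ = Q(G)` and `Nᵀ N = A(L(G)) + 2I`,
because two distinct edges share at most one vertex. Sylvester's identity
`xⁿ P_{Nᵀ N}(x) = xᵐ P_{N Nᵀ}(x)` shifted by `x ↦ x + 2` is then the claim. -/

open Matrix Finset

theorem Sym2.card_filter_mem_and_mem_of_ne {α : Type*} [Fintype α] [DecidableEq α]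
    {e f : Sym2 α} (hne : e ≠ f) :
    #{v | v ∈ e ∧ v ∈ f} = if ∃ v, v ∈ e ∧ v ∈ f then 1 else 0 := by
  split_ifs with h
  · obtain ⟨v, hve, hvf⟩ := h
    refine card_eq_one.2 ⟨v, eq_singleton_iff_unique_mem.2 ⟨by simp [hve, hvf], ?_⟩⟩
    intro w hw
    rw [mem_filter] at hw
    by_contra hwv
    exact hne (Sym2.eq_of_ne_mem hwv hw.2.1 hve hw.2.2 hvf)
  · simpa [filter_eq_empty_iff] using h

namespace SimpleGraph

variable {R : Type*} (R) (G : SimpleGraph V) [DecidableEq V] [DecidableRel G.Adj]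

def edgeIncMatrix [Zero R] [One R] : Matrix V G.edgeSet R :=
  (G.incMatrix R).submatrix id (↑)

variable {R} [Fintype V] [Semiring R]

theorem edgeIncMatrix_mul_transpose :
    G.edgeIncMatrix R * (G.edgeIncMatrix R)ᵀ = G.incMatrix R * (G.incMatrix R)ᵀ := by
  ext a b
  simp only [edgeIncMatrix, mul_apply, transpose_apply, submatrix_apply, id_eq]
  rw [sum_set_coe (f := fun e => G.incMatrix R a e * G.incMatrix R b e)]
  refine sum_subset (subset_univ _) fun e _ he => ?_
  rw [G.incMatrix_of_notMem_incidenceSet fun h => he (Set.mem_toFinset.2 h.1), zero_mul]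

theorem transpose_edgeIncMatrix_mul :
    (G.edgeIncMatrix R)ᵀ * G.edgeIncMatrix R = G.lineGraph.adjMatrix R + scalar G.edgeSet 2 := by
  rw [edgeIncMatrix, transpose_submatrix, ← submatrix_mul _ _ _ _ _ Function.bijective_id]
  ext e f
  rcases eq_or_ne e f with rfl | hne
  · simp [incMatrix_transpose_mul_diag]
  · simp only [submatrix_apply, mul_apply, transpose_apply, incMatrix_apply', ite_zero_mul_ite_zero,
      one_mul, sum_boole, incidenceSet, Set.mem_ofPred_eq, e.2, f.2, true_and]
    rw [Sym2.card_filter_mem_and_mem_of_ne (Subtype.coe_injective.ne hne)]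
    simp [lineGraph_adj_iff_exists, hne]

end SimpleGraph

theorem incMatrix_mul_transpose_eq_signlessLaplacian (G : SimpleGraph V) [Fintype V]
    [DecidableEq V] [DecidableRel G.Adj] :
    G.incMatrix ℝ * (G.incMatrix ℝ)ᵀ = signlessLaplacian G := by
  ext a b
  rw [G.incMatrix_mul_transpose]
  rcases eq_or_ne a b with rfl | hne
  · simp [signlessLaplacian]
  · simp [signlessLaplacian, hne]

/-- For a graph `G` with `n` vertices and `m` edges,
`P_{A(L(G))}(x) = (x+2)^{m-n} · P_{Q(G)}(x+2)`  (stated multiplied through by `(x+2)^n`,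
so that it also makes sense when `m < n`). -/
theorem lineGraph_charpoly (G : SimpleGraph V) [Fintype V] [DecidableEq V]
    [DecidableRel G.Adj] (n m : ℕ) (hn : n = Fintype.card V) (hm : m = G.edgeFinset.card) :
    (G.lineGraph.adjMatrix ℝ).charpoly * (X + 2) ^ n =
      ((signlessLaplacian G).charpoly.comp (X + 2)) * (X + 2) ^ m := by
  subst hn hm
  have sylvester := congrArg (·.comp (X + C 2))
    (charpoly_mul_comm' (G.edgeIncMatrix ℝ)ᵀ (G.edgeIncMatrix ℝ))
  have shift : (G.lineGraph.adjMatrix ℝ + scalar G.edgeSet 2).charpoly.comp (X + C 2) =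
      (G.lineGraph.adjMatrix ℝ).charpoly := by
    rw [← charpoly_sub_scalar, add_sub_cancel_right]
  simp only [G.transpose_edgeIncMatrix_mul, G.edgeIncMatrix_mul_transpose,
    incMatrix_mul_transpose_eq_signlessLaplacian, mul_comp, X_pow_comp, shift] at sylvester
  rw [G.edgeFinset_card, ← C_ofNat]
  linear_combination sylvester
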